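/- Let n = m + r with m ≥ 2, τ ∈ {1,−1}, let A', D' be r×r real symmetric matrices, and set A = blockDiag(τF_m, A') and D = blockDiag(τE_m, D'). Let b, e ∈ ℝⁿ and c ∈ ℝ, and suppose the Slater condition holds. Then problem (P) is unbounded from below. -/

import Mathlib

/-!
Let `u`, `v` be the basis vectors of the first and the last coordinate of the `τ F_m` block.
The first row and column of `F_m` vanish, so `A u = 0 = uᵀ A`, while `E_m` restricted to
`span {u, v}` is the hyperbolic form `2 t s`. Starting from a Slater point `x₀`, along
`x₀ + t u + s v` the constraint is `h₀ + γ t + δ s + κ s²` and the objective is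
`f₀ + α t + β s + τ t s`. For a suitable fixed `s` both are affine in `t`, with slopes that
let `t → ±∞` drive the objective to `-∞` while the constraint stays nonpositive.
-/

open Matrix

/-- The `m × m` anti-diagonal matrix `E_m`: `(E_m)_{i,j} = 1` iff `i + j = m + 1`
(with 1-based indexing). -/
noncomputable def Emat (m : ℕ) : Matrix (Fin m) (Fin m) ℝ :=
  fun i j => if (i : ℕ) + (j : ℕ) + 1 = m then 1 else 0

/-- The `m × m` lower striped matrix `F_m`: `(F_m)_{i,j} = 1` iff `i + j = m + 2`
(with 1-based indexing). -/
noncomputable def Fmat (m : ℕ) : Matrix (Fin m) (Fin m) ℝ :=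
  fun i j => if (i : ℕ) + (j : ℕ) = m then 1 else 0

open Filter Topology

theorem exists_le_zero_and_lt (h₀ γ δ κ f₀ α β ρ M : ℝ) (hh₀ : h₀ < 0) (hρ : ρ ≠ 0) :
    ∃ t s : ℝ, h₀ + γ * t + δ * s + κ * s ^ 2 ≤ 0 ∧ f₀ + α * t + β * s + ρ * (t * s) < M := by
  suffices ∃ s t : ℝ, h₀ + δ * s + κ * s ^ 2 + γ * t ≤ 0 ∧ f₀ + β * s + (α + ρ * s) * t < M by
    obtain ⟨s, t, hh, hf⟩ := this
    exact ⟨t, s, by linarith, by linarith⟩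
  by_cases hγ : γ = 0
  · -- `s` small and nonzero keeps the constraint negative and makes the objective's slope nonzero.
    have hneg : ∀ᶠ s in 𝓝[≠] 0, h₀ + δ * s + κ * s ^ 2 < 0 :=
      nhdsWithin_le_nhds <| (by fun_prop : Continuous fun s : ℝ ↦ h₀ + δ * s + κ * s ^ 2)
        |>.continuousAt.eventually_lt continuousAt_const (by simpa using hh₀)
    have hslope : ∀ᶠ s in 𝓝[≠] (0 : ℝ), α + ρ * s ≠ 0 := by
      filter_upwards [nhdsNE_le_cofinite (0 : ℝ) (eventually_cofinite_ne (-α / ρ))] with s hs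
      contrapose! hs
      field_simp
      linarith
    obtain ⟨s, hs, hs'⟩ := (hneg.and hslope).exists
    refine ⟨s, (M - f₀ - β * s - 1) / (α + ρ * s), by simp [hγ]; linarith, ?_⟩
    rw [mul_div_cancel₀ _ hs']
    linarith
  · -- This `s` makes the two slopes equal.
    set s := (γ - α) / ρ
    have hslope : α + ρ * s = γ := by rw [mul_div_cancel₀ _ hρ]; ring
    have hle := min_le_left (-(h₀ + δ * s + κ * s ^ 2)) (M - f₀ - β * s - 1)
    have hle' := min_le_right (-(h₀ + δ * s + κ * s ^ 2)) (M - f₀ - β * s - 1)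
    refine ⟨s, min (-(h₀ + δ * s + κ * s ^ 2)) (M - f₀ - β * s - 1) / γ, ?_, ?_⟩
    · rw [mul_div_cancel₀ _ hγ]
      linarith
    · rw [hslope, mul_div_cancel₀ _ hγ]
      linarith

section QuadraticForm

variable {ι : Type*} [Fintype ι]

theorem dotProduct_mulVec_add_smul_add_smul (Q : Matrix ι ι ℝ) (x u v : ι → ℝ) (t s : ℝ) :
    (x + t • u + s • v) ⬝ᵥ Q *ᵥ (x + t • u + s • v) =
      x ⬝ᵥ Q *ᵥ x + t * (u ⬝ᵥ Q *ᵥ x + x ⬝ᵥ Q *ᵥ u) + s * (v ⬝ᵥ Q *ᵥ x + x ⬝ᵥ Q *ᵥ v)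
        + t ^ 2 * (u ⬝ᵥ Q *ᵥ u) + t * s * (u ⬝ᵥ Q *ᵥ v + v ⬝ᵥ Q *ᵥ u)
        + s ^ 2 * (v ⬝ᵥ Q *ᵥ v) := by
  simp only [mulVec_add, mulVec_smul, dotProduct_add, add_dotProduct, dotProduct_smul,
    smul_dotProduct, smul_eq_mul]
  ring

theorem exists_feasible_lt_of_isotropic_pair (A D : Matrix ι ι ℝ) (b e : ι → ℝ) (c : ℝ)
    (u v : ι → ℝ) (hAu : A *ᵥ u = 0) (huA : u ᵥ* A = 0) (hDu : u ⬝ᵥ D *ᵥ u = 0)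
    (hDv : v ⬝ᵥ D *ᵥ v = 0) (hDuv : u ⬝ᵥ D *ᵥ v + v ⬝ᵥ D *ᵥ u ≠ 0)
    (hslater : ∃ x : ι → ℝ, (1/2) * (x ⬝ᵥ A *ᵥ x) + b ⬝ᵥ x + c < 0) (M : ℝ) :
    ∃ x : ι → ℝ,
      (1/2) * (x ⬝ᵥ A *ᵥ x) + b ⬝ᵥ x + c ≤ 0 ∧ (1/2) * (x ⬝ᵥ D *ᵥ x) + e ⬝ᵥ x < M := by
  obtain ⟨x, hx⟩ := hslater
  have huA' : ∀ y, u ⬝ᵥ A *ᵥ y = 0 := fun y ↦ by rw [dotProduct_mulVec, huA, zero_dotProduct]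
  obtain ⟨t, s, hh, hf⟩ := exists_le_zero_and_lt _ (b ⬝ᵥ u)
    ((v ⬝ᵥ A *ᵥ x + x ⬝ᵥ A *ᵥ v) / 2 + b ⬝ᵥ v) ((v ⬝ᵥ A *ᵥ v) / 2)
    ((1/2) * (x ⬝ᵥ D *ᵥ x) + e ⬝ᵥ x) ((u ⬝ᵥ D *ᵥ x + x ⬝ᵥ D *ᵥ u) / 2 + e ⬝ᵥ u)
    ((v ⬝ᵥ D *ᵥ x + x ⬝ᵥ D *ᵥ v) / 2 + e ⬝ᵥ v) ((u ⬝ᵥ D *ᵥ v + v ⬝ᵥ D *ᵥ u) / 2) M hx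
    (by simpa using hDuv)
  refine ⟨x + t • u + s • v, ?_, ?_⟩
  · rw [dotProduct_mulVec_add_smul_add_smul]
    simp only [huA', hAu, dotProduct_zero, dotProduct_add, dotProduct_smul, smul_eq_mul]
    linear_combination hh
  · rw [dotProduct_mulVec_add_smul_add_smul, hDu, hDv]
    simp only [dotProduct_add, dotProduct_smul, smul_eq_mul]
    linear_combination hf

end QuadraticForm

theorem Fmat_apply_zero_right (m : ℕ) (i : Fin (m + 1)) : Fmat (m + 1) i 0 = 0 := by
  simp [Fmat, i.is_lt.ne]

theorem Fmat_apply_zero_left (m : ℕ) (j : Fin (m + 1)) : Fmat (m + 1) 0 j = 0 := by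
  simp [Fmat, j.is_lt.ne]

theorem Emat_apply_zero_zero (m : ℕ) : Emat (m + 2) 0 0 = 0 := by
  simp [Emat]

theorem Emat_apply_last_last (m : ℕ) : Emat (m + 2) (Fin.last _) (Fin.last _) = 0 := by
  simp [Emat]

theorem Emat_apply_zero_last (m : ℕ) : Emat (m + 1) 0 (Fin.last m) = 1 := by
  simp [Emat]

theorem Emat_apply_last_zero (m : ℕ) : Emat (m + 1) (Fin.last m) 0 = 1 := by
  simp [Emat]

section BlockDiagonal

variable {ι κ ν R : Type*} [Fintype ν] [DecidableEq ν] [Semiring R]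
  (P : Matrix ι ι R) (Q : Matrix κ κ R) (e : ι ⊕ κ ≃ ν)

theorem reindex_fromBlocks_mulVec_single_inl {j : ι} (hP : ∀ i, P i j = 0) :
    reindex e e (fromBlocks P 0 0 Q) *ᵥ Pi.single (e (.inl j)) 1 = 0 := by
  ext k
  rcases hk : e.symm k with i | i <;> simp [hk, hP]

theorem single_inl_vecMul_reindex_fromBlocks {i : ι} (hP : ∀ j, P i j = 0) :
    Pi.single (e (.inl i)) 1 ᵥ* reindex e e (fromBlocks P 0 0 Q) = 0 := by
  ext k
  rcases hk : e.symm k with j | j <;> simp [hk, hP]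

end BlockDiagonal

theorem stmt_5 (m r : ℕ) (hm : 2 ≤ m) (τ : ℝ) (hτ : τ = 1 ∨ τ = -1)
    (A' D' : Matrix (Fin r) (Fin r) ℝ)
    (A D : Matrix (Fin (m + r)) (Fin (m + r)) ℝ)
    (hA : A = Matrix.reindex finSumFinEquiv finSumFinEquiv
      (Matrix.fromBlocks (τ • Fmat m) 0 0 A'))
    (hD : D = Matrix.reindex finSumFinEquiv finSumFinEquiv
      (Matrix.fromBlocks (τ • Emat m) 0 0 D'))
    (b e : Fin (m + r) → ℝ) (c : ℝ)
    (hslater : ∃ x : Fin (m + r) → ℝ, (1/2) * (x ⬝ᵥ A.mulVec x) + b ⬝ᵥ x + c < 0) :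
    ∀ M : ℝ, ∃ x : Fin (m + r) → ℝ,
      (1/2) * (x ⬝ᵥ A.mulVec x) + b ⬝ᵥ x + c ≤ 0 ∧
      (1/2) * (x ⬝ᵥ D.mulVec x) + e ⬝ᵥ x < M := by
  obtain ⟨k, rfl⟩ : ∃ k, m = k + 2 := ⟨m - 2, by omega⟩
  have hτ₀ : τ ≠ 0 := by rcases hτ with rfl | rfl <;> norm_num
  subst hA hD
  refine exists_feasible_lt_of_isotropic_pair _ _ b e c (Pi.single (finSumFinEquiv (.inl 0)) 1)
    (Pi.single (finSumFinEquiv (.inl (Fin.last _))) 1) ?_ ?_ ?_ ?_ ?_ hslater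
  · exact reindex_fromBlocks_mulVec_single_inl _ _ _ fun i ↦ by simp [Fmat_apply_zero_right]
  · exact single_inl_vecMul_reindex_fromBlocks _ _ _ fun j ↦ by simp [Fmat_apply_zero_left]
  · simp [Emat_apply_zero_zero]
  · simp [Emat_apply_last_last]
  · simp [Emat_apply_zero_last, Emat_apply_last_zero, hτ₀]
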